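/- arXiv:1402.0177 — 2 statements merged into one kernel-verified Lean document; each statement's English description precedes it below -/
import Mathlib

section
/- Let G be a connected graph of order n ≥ 2, H a connected non-bipartite graph of order n′, and v ∈ V(H). Then n ≤ dim_l(G∘_v H) ≤ n(n′−2). -/
open SimpleGraph

/-- A set `S` is a local metric generator for `G` if every pair of adjacent
vertices is distinguished, by distance, by some element of `S`. -/
def IsLocalMetricGenerator {V : Type*} (G : SimpleGraph V) (S : Set V) : Prop :=
  ∀ ⦃u v : V⦄, G.Adj u v → ∃ w ∈ S, G.dist u w ≠ G.dist v w

/-- The local metric dimension of a graph. -/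
noncomputable def localMetricDim {V : Type*} [Fintype V] (G : SimpleGraph V) : ℕ :=
  sInf {k | ∃ S : Finset V, IsLocalMetricGenerator G ↑S ∧ S.card = k}

/-- A local metric basis: a local metric generator of minimum cardinality. -/
def IsLocalMetricBasis {V : Type*} [Fintype V] (G : SimpleGraph V) (S : Finset V) : Prop :=
  IsLocalMetricGenerator G ↑S ∧ S.card = localMetricDim G

/-- The rooted product G ∘_v H: a copy of H is attached at its root v to each
vertex of G. Vertex (g, v) plays the role of the g-th vertex of G. -/
def rootedProd {V W : Type*} (G : SimpleGraph V) (H : SimpleGraph W) (v : W) :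
    SimpleGraph (V × W) :=
  SimpleGraph.fromRel (fun a b =>
    (a.1 = b.1 ∧ H.Adj a.2 b.2) ∨ (a.2 = v ∧ b.2 = v ∧ G.Adj a.1 b.1))

/-!
A path leaving a copy of `H` passes through its root, so an edge `(g, a) ~ (g, b)` with
`d(a, v) = d(b, v)` is distinguished only by vertices of the `g`-th copy. A non-bipartite `H` has
such an edge (otherwise the parity of `d(·, v)` would be a 2-colouring), hence a local metric
generator meets each of the `n` copies.

Conversely, for `u ≠ v` the vertices `(g, w)` with `w ∉ {v, u}` form a local metric generator: an
edge with such an endpoint is distinguished by it, an edge `v ~ u` inside a copy by any of these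
vertices in another copy, and an edge between two roots `(g, v) ~ (h, v)` by one in the copy at `g`.
-/

namespace SimpleGraph

variable {V V' : Type*} {G : SimpleGraph V} {G' : SimpleGraph V'}

lemma Connected.dist_map_le (hG : G.Connected) (f : G →g G') (a b : V) :
    G'.dist (f a) (f b) ≤ G.dist a b := by
  obtain ⟨p, hp⟩ := hG.exists_walk_length_eq_dist a b
  simpa [hp] using dist_le (p.map f)

lemma Adj.dist_le_dist_add_one {a b : V} (h : G.Adj a b) (c : V) :
    G.dist a c ≤ G.dist b c + 1 := by
  rw [dist_comm, dist_comm (u := b)]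
  rcases h.symm.diff_dist_adj (u := c) with h | h | h <;> omega

lemma le_dist_add_of_adj_le_add_one (f : V → ℕ) (hf : ∀ a b, G.Adj a b → f a ≤ f b + 1)
    {a t : V} (h : G.Reachable a t) : f a ≤ G.dist a t + f t := by
  obtain ⟨p, hp⟩ := h.exists_walk_length_eq_dist
  rw [← hp]
  clear hp h
  induction p with
  | nil => simp
  | cons hadj _ ih =>
    have := hf _ _ hadj
    rw [Walk.length_cons]
    omega

lemma Adj.exists_mem_dist_ne {S : Set V} {p q : V} (h : G.Adj p q) (hS : p ∈ S ∨ q ∈ S) :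
    ∃ w ∈ S, G.dist p w ≠ G.dist q w := by
  rcases hS with hp | hq
  · exact ⟨p, hp, by simpa [dist_comm] using (h.reachable.pos_dist_of_ne h.ne).ne⟩
  · exact ⟨q, hq, by simpa using (h.reachable.pos_dist_of_ne h.ne).ne'⟩

lemma exists_adj_dist_eq_of_not_colorable_two (hG : ¬ G.Colorable 2) (v : V) :
    ∃ a b, G.Adj a b ∧ G.dist a v = G.dist b v := by
  by_contra! h
  refine hG ⟨Coloring.mk (fun a => ⟨G.dist a v % 2, Nat.mod_lt _ two_pos⟩)
    fun {a b} hab => ?_⟩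
  have := hab.dist_le_dist_add_one v
  have := hab.symm.dist_le_dist_add_one v
  have := h a b hab
  simp only [ne_eq, Fin.mk.injEq]
  omega

end SimpleGraph

section LocalMetricDim

variable {V : Type*} [Fintype V] {G : SimpleGraph V}

lemma localMetricDim_le {S : Finset V} (hS : IsLocalMetricGenerator G S) :
    localMetricDim G ≤ S.card :=
  Nat.sInf_le ⟨S, hS, rfl⟩

lemma le_localMetricDim {k : ℕ}
    (h : ∀ S : Finset V, IsLocalMetricGenerator G S → k ≤ S.card) : k ≤ localMetricDim G := by
  have hne : {k | ∃ S : Finset V, IsLocalMetricGenerator G ↑S ∧ S.card = k}.Nonempty :=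
    ⟨_, Finset.univ, fun _ _ hpq => hpq.exists_mem_dist_ne (by simp), rfl⟩
  obtain ⟨S, hS, hcard⟩ := Nat.sInf_mem hne
  rw [localMetricDim, ← hcard]
  exact h S hS

end LocalMetricDim

section RootedProd

variable {V W : Type*} {G : SimpleGraph V} {H : SimpleGraph W} {v : W}

lemma rootedProd_adj {a b : V × W} :
    (rootedProd G H v).Adj a b ↔
      (a.1 = b.1 ∧ H.Adj a.2 b.2) ∨ (a.2 = v ∧ b.2 = v ∧ G.Adj a.1 b.1) := by
  rw [rootedProd, fromRel_adj]
  constructor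
  · rintro ⟨-, (h | h) | (h | h)⟩
    · exact Or.inl h
    · exact Or.inr h
    · exact Or.inl ⟨h.1.symm, h.2.symm⟩
    · exact Or.inr ⟨h.2.1, h.1, h.2.2.symm⟩
  · rintro (h | h)
    · exact ⟨fun e => h.2.ne (congrArg Prod.snd e), Or.inl (Or.inl h)⟩
    · exact ⟨fun e => h.2.2.ne (congrArg Prod.fst e), Or.inl (Or.inr h)⟩

variable (G H v) in
def rootedProd.fiberHom (g : V) : H →g rootedProd G H v where
  toFun w := (g, w)
  map_rel' hab := rootedProd_adj.2 (Or.inl ⟨rfl, hab⟩)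

variable (G H v) in
def rootedProd.rootHom : G →g rootedProd G H v where
  toFun g := (g, v)
  map_rel' hab := rootedProd_adj.2 (Or.inr ⟨rfl, rfl, hab⟩)

lemma rootedProd_connected (hG : G.Connected) (hH : H.Connected) :
    (rootedProd G H v).Connected := by
  have : Nonempty (V × W) := ⟨(hG.nonempty.some, v)⟩
  refine .mk fun a b => ?_
  have toRoot : ∀ p : V × W, (rootedProd G H v).Reachable p (p.1, v) := fun p =>
    (hH.preconnected p.2 v).map (rootedProd.fiberHom G H v p.1)
  exact (toRoot a).trans (((hG.preconnected a.1 b.1).map (rootedProd.rootHom G H v)).trans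
    (toRoot b).symm)

variable (G H v) in
open Classical in
noncomputable def rootedProdDist (a b : V × W) : ℕ :=
  if a.1 = b.1 then H.dist a.2 b.2 else H.dist a.2 v + G.dist a.1 b.1 + H.dist v b.2

lemma rootedProdDist_le_add_one {a b : V × W} (hab : (rootedProd G H v).Adj a b) (t : V × W) :
    rootedProdDist G H v a t ≤ rootedProdDist G H v b t + 1 := by
  unfold rootedProdDist
  rcases rootedProd_adj.1 hab with ⟨hfst, hadj⟩ | ⟨ha, hb, hadj⟩
  · have := hadj.dist_le_dist_add_one t.2
    have := hadj.dist_le_dist_add_one v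
    rw [hfst]
    split_ifs <;> omega
  · have := hadj.dist_le_dist_add_one t.1
    rw [ha, hb, dist_self]
    split_ifs with h₁ h₂ h₂
    · exact absurd (h₁.trans h₂.symm) hadj.ne
    · omega
    · rw [h₂, dist_self] at this
      omega
    · omega

lemma dist_rootedProd (hG : G.Connected) (hH : H.Connected) (a b : V × W) :
    (rootedProd G H v).dist a b = rootedProdDist G H v a b := by
  have hR := rootedProd_connected (v := v) hG hH
  refine le_antisymm ?_ ?_
  · obtain ⟨g, x⟩ := a
    obtain ⟨h, y⟩ := b
    unfold rootedProdDist
    split_ifs with hgh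
    · subst hgh
      exact hH.dist_map_le (rootedProd.fiberHom G H v g) x y
    · calc (rootedProd G H v).dist (g, x) (h, y)
          ≤ (rootedProd G H v).dist (g, x) (g, v) + (rootedProd G H v).dist (g, v) (h, v) +
              (rootedProd G H v).dist (h, v) (h, y) :=
            hR.dist_triangle.trans (Nat.add_le_add_right hR.dist_triangle _)
        _ ≤ H.dist x v + G.dist g h + H.dist v y := by
          gcongr
          · exact hH.dist_map_le (rootedProd.fiberHom G H v g) x v
          · exact hG.dist_map_le (rootedProd.rootHom G H v) g h
          · exact hH.dist_map_le (rootedProd.fiberHom G H v h) v y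
  · have h := le_dist_add_of_adj_le_add_one (rootedProdDist G H v · b)
      (fun _ _ hxy => rootedProdDist_le_add_one hxy b) (hR.preconnected a b)
    simpa [rootedProdDist] using h

lemma dist_rootedProd_of_fst_eq (hG : G.Connected) (hH : H.Connected) (g : V) (x y : W) :
    (rootedProd G H v).dist (g, x) (g, y) = H.dist x y := by
  simp [dist_rootedProd hG hH, rootedProdDist]

lemma dist_rootedProd_of_fst_ne (hG : G.Connected) (hH : H.Connected) {g h : V} (hgh : g ≠ h)
    (x y : W) :
    (rootedProd G H v).dist (g, x) (h, y) = H.dist x v + G.dist g h + H.dist v y := by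
  simp [dist_rootedProd hG hH, rootedProdDist, hgh]

end RootedProd

section Bounds

variable {V W : Type*} [Fintype V] [Fintype W] {G : SimpleGraph V} {H : SimpleGraph W} {v : W}

lemma card_le_localMetricDim_rootedProd (hG : G.Connected) (hH : H.Connected)
    (hnb : ¬ H.Colorable 2) : Fintype.card V ≤ localMetricDim (rootedProd G H v) := by
  obtain ⟨a, b, hab, hdist⟩ := exists_adj_dist_eq_of_not_colorable_two hnb v
  refine le_localMetricDim fun S hS => ?_
  have hmeet : ∀ g, ∃ w ∈ S, w.1 = g := by
    intro g
    obtain ⟨⟨h, y⟩, hwS, hw⟩ := hS ((rootedProd.fiberHom G H v g).map_adj hab)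
    refine ⟨(h, y), hwS, by_contra fun hgh => hw ?_⟩
    simp only [rootedProd.fiberHom, RelHom.coeFn_mk,
      dist_rootedProd_of_fst_ne hG hH (Ne.symm hgh), hdist]
  choose w hwS hw using hmeet
  calc Fintype.card V = (Finset.univ : Finset V).card := Finset.card_univ.symm
    _ ≤ S.card := Finset.card_le_card_of_injOn w (fun g _ => hwS g)
      fun g _ h _ e => (hw g).symm.trans ((congrArg Prod.fst e).trans (hw h))

lemma isLocalMetricGenerator_rootedProd [Nontrivial V] [DecidableEq W] (hG : G.Connected)
    (hH : H.Connected) {u w : W} (hwv : w ≠ v) (hwu : w ≠ u) :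
    IsLocalMetricGenerator (rootedProd G H v)
      ↑((Finset.univ : Finset V) ×ˢ ({v, u}ᶜ : Finset W)) := by
  rintro ⟨g, x⟩ ⟨h, y⟩ hxy
  by_cases hS : (g, x) ∈ Finset.univ ×ˢ ({v, u}ᶜ : Finset W) ∨
      (h, y) ∈ Finset.univ ×ˢ ({v, u}ᶜ : Finset W)
  · exact hxy.exists_mem_dist_ne hS
  simp only [Finset.mem_product, Finset.mem_univ, true_and, Finset.mem_compl, Finset.mem_insert,
    Finset.mem_singleton, not_or] at hS
  rcases rootedProd_adj.1 hxy with ⟨rfl, hxy⟩ | ⟨hx, hy, hgh⟩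
  · obtain ⟨g', hg'⟩ := exists_ne g
    refine ⟨(g', w), by simp [hwv, hwu], ?_⟩
    rw [dist_rootedProd_of_fst_ne hG hH hg'.symm, dist_rootedProd_of_fst_ne hG hH hg'.symm,
      ne_eq, Nat.add_right_cancel_iff, Nat.add_right_cancel_iff]
    intro heq
    have := hH.dist_eq_zero_iff (u := x) (v := v)
    have := hH.dist_eq_zero_iff (u := y) (v := v)
    have := hxy.ne
    grind
  · refine ⟨(g, w), by simp [hwv, hwu], ?_⟩
    simp only at hx hy hgh
    rw [dist_rootedProd_of_fst_eq hG hH, dist_rootedProd_of_fst_ne hG hH hgh.ne.symm, hx, hy,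
      dist_self]
    have := hG.pos_dist_of_ne hgh.ne.symm
    omega

lemma localMetricDim_rootedProd_le [Nontrivial V] (hG : G.Connected) (hH : H.Connected)
    (hW : 3 ≤ Fintype.card W) :
    localMetricDim (rootedProd G H v) ≤ Fintype.card V * (Fintype.card W - 2) := by
  classical
  have : Nontrivial W := Fintype.one_lt_card_iff_nontrivial.1 (by omega)
  obtain ⟨u, hu⟩ := exists_ne v
  have hcard : ({v, u}ᶜ : Finset W).card = Fintype.card W - 2 := by
    rw [Finset.card_compl, Finset.card_pair hu.symm]
  obtain ⟨w, hw⟩ : ({v, u}ᶜ : Finset W).Nonempty := Finset.card_pos.1 (by omega)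
  simp only [Finset.mem_compl, Finset.mem_insert, Finset.mem_singleton, not_or] at hw
  calc localMetricDim (rootedProd G H v)
      ≤ (Finset.univ ×ˢ ({v, u}ᶜ : Finset W)).card :=
        localMetricDim_le (isLocalMetricGenerator_rootedProd hG hH hw.1 hw.2)
    _ = Fintype.card V * (Fintype.card W - 2) := by
        rw [Finset.card_product, Finset.card_univ, hcard]

end Bounds

/-- For G connected of order n ≥ 2 and H connected non-bipartite of order n',
n ≤ dim_l(G ∘_v H) ≤ n(n' - 2). -/
theorem localMetricDim_rootedProd_bounds {V W : Type*} [Fintype V] [Fintype W]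
    (G : SimpleGraph V) (H : SimpleGraph W) (v : W) (hG : G.Connected) (hH : H.Connected)
    (hnb : ¬ H.Colorable 2) (hn : 2 ≤ Fintype.card V) :
    Fintype.card V ≤ localMetricDim (rootedProd G H v) ∧
      localMetricDim (rootedProd G H v) ≤ Fintype.card V * (Fintype.card W - 2) := by
  have : Nontrivial V := Fintype.one_lt_card_iff_nontrivial.1 hn
  have hW : 3 ≤ Fintype.card W := by
    by_contra! h
    exact hnb (H.colorable_of_fintype.mono (by omega))
  exact ⟨card_le_localMetricDim_rootedProd hG hH hnb, localMetricDim_rootedProd_le hG hH hW⟩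
end

section
/- Let G be the graph obtained by identifying a vertex x of a connected graph G_1 with a vertex of a connected graph G_2 (a one-point union). If G_2 is bipartite and G_1 is non-bipartite, then dim_l(G) = dim_l(G_1). -/
/-!
The bouquet maps into the box product `G₁ □ G₂` by `inl u ↦ (u, x₂)`, `inr w ↦ (x₁, w)`, and this
map preserves distances from the vertices of `G₁`: `d(u, b) = d₁(u, b₁) + d₂(x₂, b₂)`. Hence a
vertex on the `G₂` side resolves an edge of `G₁` exactly when `x₁` does, so projecting a local
metric basis of the bouquet onto `G₁` gives `dim_l G₁ ≤ dim_l G`. Conversely a local metric basis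
of `G₁` still resolves the edges of `G₁`; since `G₂` is bipartite, the endpoints of an edge of `G₂`
lie at distances of different parity from `x₂`, so any vertex of `G₁` resolves the edges of `G₂`,
and the basis is nonempty because the non-bipartite `G₁` has an edge.
-/

open SimpleGraph

/-- The one-point union (bouquet) of G₁ and G₂, identifying x₁ ∈ V(G₁) with
x₂ ∈ V(G₂); the vertex Sum.inl x₁ plays the role of the identified vertex. -/
def onePointUnion {V W : Type*} (G₁ : SimpleGraph V) (G₂ : SimpleGraph W)
    (x₁ : V) (x₂ : W) : SimpleGraph (V ⊕ {b : W // b ≠ x₂}) :=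
  SimpleGraph.fromRel (fun a b => match a, b with
    | .inl u, .inl w => G₁.Adj u w
    | .inr u, .inr w => G₂.Adj u.1 w.1
    | .inl u, .inr w => u = x₁ ∧ G₂.Adj x₂ w.1
    | .inr _, .inl _ => False)

section

variable {V W : Type*}

theorem SimpleGraph.Adj.dist_ne_dist_of_colorable_two {G : SimpleGraph V} (hb : G.Colorable 2)
    {u v x : V} (h : G.Adj u v) (hx : G.Reachable u x) : G.dist u x ≠ G.dist v x := by
  obtain ⟨c⟩ := hb
  let c' : G.Coloring Bool := G.recolorOfEquiv finTwoEquiv c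
  obtain ⟨p, hp⟩ := hx.exists_walk_length_eq_dist
  obtain ⟨q, hq⟩ := (h.symm.reachable.trans hx).exists_walk_length_eq_dist
  intro heq
  have hpq : (c' u ↔ c' x) ↔ (c' v ↔ c' x) := by
    rw [← c'.even_length_iff_congr p, ← c'.even_length_iff_congr q, hp, hq, heq]
  exact c'.valid h (Bool.eq_iff_iff.2 (by tauto))

theorem SimpleGraph.Hom.dist_map_le {V' : Type*} {G : SimpleGraph V} {G' : SimpleGraph V'}
    (f : G →g G') {u v : V} (h : G.Reachable u v) : G'.dist (f u) (f v) ≤ G.dist u v := by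
  obtain ⟨p, hp⟩ := h.exists_walk_length_eq_dist
  simpa [hp] using G'.dist_le (p.map f)

theorem SimpleGraph.dist_boxProd {G₁ : SimpleGraph V} {G₂ : SimpleGraph W} {x y : V × W}
    (h₁ : G₁.Reachable x.1 y.1) (h₂ : G₂.Reachable x.2 y.2) :
    (G₁ □ G₂).dist x y = G₁.dist x.1 y.1 + G₂.dist x.2 y.2 := by
  have h : (G₁ □ G₂).Reachable x y := reachable_boxProd.2 ⟨h₁, h₂⟩
  apply Nat.cast_injective (R := ℕ∞)
  rw [Nat.cast_add, h.coe_dist_eq_edist, h₁.coe_dist_eq_edist, h₂.coe_dist_eq_edist,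
    edist_boxProd]

theorem isLocalMetricGenerator_univ (G : SimpleGraph V) : IsLocalMetricGenerator G Set.univ :=
  fun u v h => ⟨u, trivial, by simp [dist_eq_one_iff_adj.2 h.symm]⟩

theorem IsLocalMetricGenerator.nonempty {G : SimpleGraph V} {S : Set V}
    (hS : IsLocalMetricGenerator G S) {u v : V} (h : G.Adj u v) : S.Nonempty :=
  let ⟨w, hw, _⟩ := hS h; ⟨w, hw⟩

theorem exists_isLocalMetricBasis [Fintype V] (G : SimpleGraph V) :
    ∃ S, IsLocalMetricBasis G S := by
  have hne : {k | ∃ S : Finset V, IsLocalMetricGenerator G ↑S ∧ S.card = k}.Nonempty :=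
    ⟨_, Finset.univ, by simpa using isLocalMetricGenerator_univ G, rfl⟩
  obtain ⟨S, hS, hcard⟩ := Nat.sInf_mem hne
  exact ⟨S, hS, hcard⟩

theorem localMetricDim_le_card [Fintype V] {G : SimpleGraph V} {S : Finset V}
    (h : IsLocalMetricGenerator G S) : localMetricDim G ≤ S.card :=
  Nat.sInf_le ⟨S, h, rfl⟩

theorem localMetricDim_le_of_forall_image [Fintype V] [Fintype W] {G : SimpleGraph V}
    {G' : SimpleGraph W} (f : V → W)
    (hf : ∀ S, IsLocalMetricGenerator G S → IsLocalMetricGenerator G' (f '' S)) :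
    localMetricDim G' ≤ localMetricDim G := by
  classical
  obtain ⟨S, hS, hcard⟩ := exists_isLocalMetricBasis G
  calc localMetricDim G' ≤ (S.image f).card :=
        localMetricDim_le_card (by simpa using hf _ hS)
    _ ≤ S.card := Finset.card_image_le
    _ = localMetricDim G := hcard

namespace onePointUnion

variable {G₁ : SimpleGraph V} {G₂ : SimpleGraph W} {x₁ : V} {x₂ : W}

@[simp]
theorem adj_inl_inl {u v : V} :
    (onePointUnion G₁ G₂ x₁ x₂).Adj (.inl u) (.inl v) ↔ G₁.Adj u v := by
  simp only [onePointUnion, fromRel_adj]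
  grind [SimpleGraph.Adj.symm, SimpleGraph.Adj.ne]

@[simp]
theorem adj_inr_inr {u v : {w : W // w ≠ x₂}} :
    (onePointUnion G₁ G₂ x₁ x₂).Adj (.inr u) (.inr v) ↔ G₂.Adj u v := by
  simp only [onePointUnion, fromRel_adj]
  grind [SimpleGraph.Adj.symm, SimpleGraph.Adj.ne]

@[simp]
theorem adj_inl_inr {u : V} {v : {w : W // w ≠ x₂}} :
    (onePointUnion G₁ G₂ x₁ x₂).Adj (.inl u) (.inr v) ↔ u = x₁ ∧ G₂.Adj x₂ v := by
  simp [onePointUnion]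

@[simp]
theorem adj_inr_inl {u : {w : W // w ≠ x₂}} {v : V} :
    (onePointUnion G₁ G₂ x₁ x₂).Adj (.inr u) (.inl v) ↔ v = x₁ ∧ G₂.Adj u x₂ := by
  rw [adj_comm, adj_inl_inr, adj_comm]

variable (G₁ G₂ x₁ x₂)

def inlHom : G₁ →g onePointUnion G₁ G₂ x₁ x₂ where
  toFun := Sum.inl
  map_rel' := adj_inl_inl.2

open Classical in
noncomputable def inrHom : G₂ →g onePointUnion G₁ G₂ x₁ x₂ where
  toFun w := if h : w = x₂ then .inl x₁ else .inr ⟨w, h⟩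
  map_rel' {a b} h := by
    by_cases ha : a = x₂ <;> by_cases hb : b = x₂
    · exact absurd (ha.trans hb.symm) h.ne
    · subst ha; simpa [hb] using h
    · subst hb; simpa [ha] using h
    · simpa [ha, hb] using h

def toBoxProd : onePointUnion G₁ G₂ x₁ x₂ →g G₁ □ G₂ where
  toFun := Sum.elim (fun u => (u, x₂)) (fun w => (x₁, w))
  map_rel' {a b} h := by
    cases a <;> cases b <;> simp_all [boxProd_adj]

@[simp]
theorem toBoxProd_inl (u : V) : toBoxProd G₁ G₂ x₁ x₂ (.inl u) = (u, x₂) := rfl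

@[simp]
theorem toBoxProd_inr (w : {w : W // w ≠ x₂}) : toBoxProd G₁ G₂ x₁ x₂ (.inr w) = (x₁, w.1) := rfl

@[simp]
theorem inlHom_apply (u : V) : inlHom G₁ G₂ x₁ x₂ u = .inl u := rfl

@[simp]
theorem inrHom_self : inrHom G₁ G₂ x₁ x₂ x₂ = .inl x₁ := dif_pos rfl

@[simp]
theorem inrHom_val (w : {w : W // w ≠ x₂}) : inrHom G₁ G₂ x₁ x₂ w = .inr w := dif_neg w.2

variable {G₁ G₂ x₁ x₂}

theorem connected (h₁ : G₁.Connected) (h₂ : G₂.Connected) :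
    (onePointUnion G₁ G₂ x₁ x₂).Connected := by
  refine (connected_iff_exists_forall_reachable _).2 ⟨.inl x₁, ?_⟩
  rintro (u | w)
  · exact (h₁.preconnected x₁ u).map (inlHom G₁ G₂ x₁ x₂)
  · simpa using (h₂.preconnected x₂ w).map (inrHom G₁ G₂ x₁ x₂)

theorem dist_inl (h₁ : G₁.Connected) (h₂ : G₂.Connected) (u : V)
    (b : V ⊕ {w : W // w ≠ x₂}) :
    (onePointUnion G₁ G₂ x₁ x₂).dist (.inl u) b =
      G₁.dist u (toBoxProd G₁ G₂ x₁ x₂ b).1 + G₂.dist x₂ (toBoxProd G₁ G₂ x₁ x₂ b).2 := by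
  refine le_antisymm ?_ ?_
  · rcases b with v | w
    · simpa using (inlHom G₁ G₂ x₁ x₂).dist_map_le (h₁.preconnected u v)
    · calc (onePointUnion G₁ G₂ x₁ x₂).dist (.inl u) (.inr w)
            ≤ (onePointUnion G₁ G₂ x₁ x₂).dist (.inl u) (.inl x₁) +
                (onePointUnion G₁ G₂ x₁ x₂).dist (.inl x₁) (.inr w) :=
              (connected h₁ h₂).dist_triangle
          _ ≤ G₁.dist u x₁ + G₂.dist x₂ w :=
              add_le_add ((inlHom G₁ G₂ x₁ x₂).dist_map_le (h₁.preconnected u x₁))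
                (by simpa using (inrHom G₁ G₂ x₁ x₂).dist_map_le (h₂.preconnected x₂ w))
  · have := (toBoxProd G₁ G₂ x₁ x₂).dist_map_le ((connected h₁ h₂).preconnected (.inl u) b)
    rwa [dist_boxProd (h₁.preconnected _ _) (h₂.preconnected _ _)] at this

theorem adj_cases {a b : V ⊕ {w : W // w ≠ x₂}} (h : (onePointUnion G₁ G₂ x₁ x₂).Adj a b) :
    (∃ u v, G₁.Adj u v ∧ a = .inl u ∧ b = .inl v) ∨
      ((toBoxProd G₁ G₂ x₁ x₂ a).1 = x₁ ∧ (toBoxProd G₁ G₂ x₁ x₂ b).1 = x₁ ∧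
        G₂.Adj (toBoxProd G₁ G₂ x₁ x₂ a).2 (toBoxProd G₁ G₂ x₁ x₂ b).2) := by
  rcases a with u | u <;> rcases b with v | v <;> simp_all

theorem isLocalMetricGenerator_image_inl (h₁ : G₁.Connected) (h₂ : G₂.Connected)
    (hb : G₂.Colorable 2) {S : Set V} (hS : IsLocalMetricGenerator G₁ S) (hne : S.Nonempty) :
    IsLocalMetricGenerator (onePointUnion G₁ G₂ x₁ x₂) (Sum.inl '' S) := by
  intro a b hab
  rcases adj_cases hab with ⟨u, v, huv, rfl, rfl⟩ | ⟨ha, hb₁, hadj⟩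
  · obtain ⟨s, hs, hsuv⟩ := hS huv
    exact ⟨.inl s, Set.mem_image_of_mem _ hs, by simpa [dist_comm, dist_inl h₁ h₂] using hsuv⟩
  · obtain ⟨s, hs⟩ := hne
    refine ⟨.inl s, Set.mem_image_of_mem _ hs, ?_⟩
    have := hadj.dist_ne_dist_of_colorable_two hb (h₂.preconnected _ x₂)
    rw [dist_comm, dist_inl h₁ h₂, dist_comm (u := b), dist_inl h₁ h₂, ha, hb₁,
      dist_comm (u := x₂), dist_comm (u := x₂)]
    omega

theorem isLocalMetricGenerator_image_fst (h₁ : G₁.Connected) (h₂ : G₂.Connected)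
    {S : Set (V ⊕ {w : W // w ≠ x₂})} (hS : IsLocalMetricGenerator (onePointUnion G₁ G₂ x₁ x₂) S) :
    IsLocalMetricGenerator G₁ ((fun a => (toBoxProd G₁ G₂ x₁ x₂ a).1) '' S) := by
  intro u v huv
  obtain ⟨s, hs, hne⟩ := hS (adj_inl_inl.2 huv)
  refine ⟨_, Set.mem_image_of_mem _ hs, ?_⟩
  rw [dist_inl h₁ h₂, dist_inl h₁ h₂] at hne
  omega

end onePointUnion

end

/-- If G is the one-point union of a non-bipartite connected graph G₁ and a
bipartite connected graph G₂, then dim_l(G) = dim_l(G₁). -/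
theorem localMetricDim_onePointUnion {V W : Type*} [Fintype V] [Fintype W]
    [DecidableEq W] (G₁ : SimpleGraph V) (G₂ : SimpleGraph W) (x₁ : V) (x₂ : W)
    (h₁ : G₁.Connected) (h₂ : G₂.Connected) (hnb : ¬ G₁.Colorable 2)
    (hb : G₂.Colorable 2) :
    localMetricDim (onePointUnion G₁ G₂ x₁ x₂) = localMetricDim G₁ := by
  obtain ⟨u, v, huv⟩ : ∃ u v, G₁.Adj u v := by
    by_contra! hno
    exact hnb ⟨Coloring.mk (fun _ => 0) fun h => (hno _ _ h).elim⟩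
  exact le_antisymm
    (localMetricDim_le_of_forall_image Sum.inl fun _ hS =>
      onePointUnion.isLocalMetricGenerator_image_inl h₁ h₂ hb hS (hS.nonempty huv))
    (localMetricDim_le_of_forall_image _ fun _ hS =>
      onePointUnion.isLocalMetricGenerator_image_fst h₁ h₂ hS)
end
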